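/- In QHC, if a proposition p is stable (i.e., ⊢ ¬!¬p → !p) then the problem !p is stable (i.e., ⊢ ¬¬!p → !p); and if ⊢ !p ∨ !¬p then ⊢ !p ∨ ¬!p. Conversely, for propositions of the form p = ?α, stability (resp. decidability) of the problem !p implies stability (resp. decidability) of p. These hold in strongly internalized form: ⊢ (¬!¬p → !p) → (¬¬!p → !p) and ⊢ (!p ∨ !¬p) → (!p ∨ ¬!p), with the converse implications derivable when p = ?α. -/

import Mathlib

/- Problem (intuitionistic) formulas and proposition (classical) formulas of QHC. -/
mutual
inductive PF : Type
  | var : Nat → PF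
  | bot : PF
  | and : PF → PF → PF
  | or : PF → PF → PF
  | imp : PF → PF → PF
  | bang : CF → PF
inductive CF : Type
  | var : Nat → CF
  | fls : CF
  | and : CF → CF → CF
  | or : CF → CF → CF
  | imp : CF → CF → CF
  | quest : PF → CF
end

def PF.neg (α : PF) : PF := α.imp PF.bot
def CF.neg (p : CF) : CF := p.imp CF.fls
def PF.iff (α β : PF) : PF := (α.imp β).and (β.imp α)
def CF.iff (p q : CF) : CF := (p.imp q).and (q.imp p)
def CF.box (p : CF) : CF := CF.quest (PF.bang p)
def PF.nabla (α : PF) : PF := PF.bang (CF.quest α)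

/- Derivability in QHC, parameterized by a set `Ax` of extra problem axioms
(used to treat the axiom ¬!0 and its variants uniformly). Intuitionistic logic
on problems, classical logic on propositions, the rules α ⊢ ?α and p ⊢ !p, and
the mixed axioms ?!p → p, α → !?α, !(p→q) → (!p → !q), ?(α→β) → (?α → ?β). -/
mutual
inductive ProvP (Ax : PF → Prop) : PF → Prop
  | axm {α} : Ax α → ProvP Ax α
  | mp {α β} : ProvP Ax (α.imp β) → ProvP Ax α → ProvP Ax β
  | ak (α β : PF) : ProvP Ax (α.imp (β.imp α))
  | as (α β γ : PF) : ProvP Ax ((α.imp (β.imp γ)).imp ((α.imp β).imp (α.imp γ)))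
  | andI (α β : PF) : ProvP Ax (α.imp (β.imp (α.and β)))
  | andE1 (α β : PF) : ProvP Ax ((α.and β).imp α)
  | andE2 (α β : PF) : ProvP Ax ((α.and β).imp β)
  | orI1 (α β : PF) : ProvP Ax (α.imp (α.or β))
  | orI2 (α β : PF) : ProvP Ax (β.imp (α.or β))
  | orE (α β γ : PF) : ProvP Ax ((α.imp γ).imp ((β.imp γ).imp ((α.or β).imp γ)))
  | exf (α : PF) : ProvP Ax (PF.bot.imp α)
  | bangIntro {p} : ProvC Ax p → ProvP Ax (PF.bang p)
  | bangImp (p q : CF) : ProvP Ax ((PF.bang (p.imp q)).imp ((PF.bang p).imp (PF.bang q)))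
  | bangQuest (α : PF) : ProvP Ax (α.imp (PF.bang (CF.quest α)))
inductive ProvC (Ax : PF → Prop) : CF → Prop
  | mp {p q} : ProvC Ax (p.imp q) → ProvC Ax p → ProvC Ax q
  | ak (p q : CF) : ProvC Ax (p.imp (q.imp p))
  | as (p q r : CF) : ProvC Ax ((p.imp (q.imp r)).imp ((p.imp q).imp (p.imp r)))
  | andI (p q : CF) : ProvC Ax (p.imp (q.imp (p.and q)))
  | andE1 (p q : CF) : ProvC Ax ((p.and q).imp p)
  | andE2 (p q : CF) : ProvC Ax ((p.and q).imp q)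
  | orI1 (p q : CF) : ProvC Ax (p.imp (p.or q))
  | orI2 (p q : CF) : ProvC Ax (q.imp (p.or q))
  | orE (p q r : CF) : ProvC Ax ((p.imp r).imp ((q.imp r).imp ((p.or q).imp r)))
  | exf (p : CF) : ProvC Ax (CF.fls.imp p)
  | lem (p : CF) : ProvC Ax (p.or (p.imp CF.fls))
  | questIntro {α} : ProvP Ax α → ProvC Ax (CF.quest α)
  | questImp (α β : PF) : ProvC Ax ((CF.quest (α.imp β)).imp ((CF.quest α).imp (CF.quest β)))
  | questBang (p : CF) : ProvC Ax ((CF.quest (PF.bang p)).imp p)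
end

/-- The axiom (!⊥): ¬!0. -/
def QHCAx : PF → Prop := fun α => α = (PF.bang CF.fls).imp PF.bot

/-- Derivability of a problem in QHC. -/
def PrvP (α : PF) : Prop := ProvP QHCAx α
/-- Derivability of a proposition in QHC. -/
def PrvC (p : CF) : Prop := ProvC QHCAx p

/-- Stability of the proposition p: ¬!¬p → !p. -/
def CF.stb (p : CF) : PF := (PF.neg (PF.bang (CF.neg p))).imp (PF.bang p)
/-- Stability of the problem !p: ¬¬!p → !p. -/
def CF.stbBang (p : CF) : PF := (PF.neg (PF.neg (PF.bang p))).imp (PF.bang p)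
/-- Decidability of the proposition p: !p ∨ !¬p. -/
def CF.dec (p : CF) : PF := (PF.bang p).or (PF.bang (CF.neg p))
/-- Decidability of the problem !p: !p ∨ ¬!p. -/
def CF.decBang (p : CF) : PF := (PF.bang p).or (PF.neg (PF.bang p))

/-! The axiom ¬!0 makes `!¬p` refute `!p`: from `!(p → 0)` and `!p` we get `!0`. Hence `¬¬!p`
gives `¬!¬p` and `!¬p` gives `¬!p`, which turns stability and decidability of `p` into those
of `!p`. For `p = ?α` the converse implication `¬!?α → !¬?α` also holds: by `α → !?α` a refutation
of `!?α` refutes `α`, then `¬α → !?¬α`, and `?¬α → ¬?α` because `?⊥ → ?!0 → 0`. -/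

namespace ProvP

variable {Ax : PF → Prop} {α β γ : PF}

theorem imp_mono_right (h : ProvP Ax (β.imp γ)) : ProvP Ax ((α.imp β).imp (α.imp γ)) :=
  .mp (.as α β γ) (.mp (.ak _ α) h)

theorem imp_trans (h₁ : ProvP Ax (α.imp β)) (h₂ : ProvP Ax (β.imp γ)) : ProvP Ax (α.imp γ) :=
  .mp (imp_mono_right h₂) h₁

theorem imp_antitone_left (h : ProvP Ax (α.imp β)) : ProvP Ax ((β.imp γ).imp (α.imp γ)) :=
  have hS : ProvP Ax ((β.imp γ).imp ((α.imp β).imp (α.imp γ))) := imp_trans (.ak _ α) (.as α β γ)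
  .mp (.mp (.as _ _ _) hS) (.mp (.ak _ _) h)

theorem mt (h : ProvP Ax (α.imp β)) : ProvP Ax (β.neg.imp α.neg) :=
  imp_antitone_left h

theorem or_mono_right (h : ProvP Ax (α.imp β)) : ProvP Ax ((γ.or α).imp (γ.or β)) :=
  .mp (.mp (.orE _ _ _) (.orI1 _ _)) (imp_trans h (.orI2 _ _))

theorem bang_mono {p q : CF} (h : ProvC Ax (p.imp q)) : ProvP Ax ((PF.bang p).imp (PF.bang q)) :=
  .mp (.bangImp p q) (.bangIntro h)

end ProvP

namespace ProvC

variable {Ax : PF → Prop} {p q r : CF}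

theorem imp_mono_right (h : ProvC Ax (q.imp r)) : ProvC Ax ((p.imp q).imp (p.imp r)) :=
  .mp (.as p q r) (.mp (.ak _ p) h)

theorem imp_trans (h₁ : ProvC Ax (p.imp q)) (h₂ : ProvC Ax (q.imp r)) : ProvC Ax (p.imp r) :=
  .mp (imp_mono_right h₂) h₁

theorem quest_bot_imp_fls : ProvC Ax ((CF.quest .bot).imp .fls) :=
  imp_trans (.mp (.questImp .bot (.bang .fls)) (.questIntro (.exf _))) (.questBang .fls)

theorem quest_neg_imp_neg_quest (α : PF) : ProvC Ax ((CF.quest α.neg).imp (CF.quest α).neg) :=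
  imp_trans (.questImp α .bot) (imp_mono_right quest_bot_imp_fls)

end ProvC

theorem ProvP.neg_bang_quest_imp_bang_neg_quest {Ax : PF → Prop} (α : PF) :
    ProvP Ax ((PF.bang (.quest α)).neg.imp (PF.bang (CF.quest α).neg)) :=
  imp_trans (mt (.bangQuest α))
    (imp_trans (.bangQuest α.neg) (bang_mono (ProvC.quest_neg_imp_neg_quest α)))

theorem bang_neg_imp_neg_bang (p : CF) : PrvP ((PF.bang p.neg).imp (PF.bang p).neg) :=
  ProvP.imp_trans (.bangImp p .fls) (ProvP.imp_mono_right (.axm rfl))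

theorem qhc_stable_decidable :
    (∀ p : CF, PrvP (CF.stb p) → PrvP (CF.stbBang p)) ∧
    (∀ p : CF, PrvP (CF.dec p) → PrvP (CF.decBang p)) ∧
    (∀ p : CF, PrvP ((CF.stb p).imp (CF.stbBang p))) ∧
    (∀ p : CF, PrvP ((CF.dec p).imp (CF.decBang p))) ∧
    (∀ α : PF, PrvP ((CF.stbBang (CF.quest α)).imp (CF.stb (CF.quest α)))) ∧
    (∀ α : PF, PrvP ((CF.decBang (CF.quest α)).imp (CF.dec (CF.quest α)))) := by
  have stb (p : CF) : PrvP ((CF.stb p).imp (CF.stbBang p)) :=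
    ProvP.imp_antitone_left (ProvP.mt (bang_neg_imp_neg_bang p))
  have dec (p : CF) : PrvP ((CF.dec p).imp (CF.decBang p)) :=
    ProvP.or_mono_right (bang_neg_imp_neg_bang p)
  have stb_quest (α : PF) : PrvP ((CF.stbBang (CF.quest α)).imp (CF.stb (CF.quest α))) :=
    ProvP.imp_antitone_left (ProvP.mt (ProvP.neg_bang_quest_imp_bang_neg_quest α))
  have dec_quest (α : PF) : PrvP ((CF.decBang (CF.quest α)).imp (CF.dec (CF.quest α))) :=
    ProvP.or_mono_right (ProvP.neg_bang_quest_imp_bang_neg_quest α)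
  exact ⟨fun p h => .mp (stb p) h, fun p h => .mp (dec p) h, stb, dec, stb_quest, dec_quest⟩
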